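/- (Regularizing-kernel bound on weighted Besov functions, Lemma 4.2(i).) Let w be a G-controlled weight, {Q_t} a G-type semigroup, and {K_t} a β̄-regularizing kernel admissible for {Q_t} with parameters δ, C_K. For every α ≤ 0 there is a constant C, depending only on G and w, such that for every measurable f with ‖f‖_{L∞(w)} < ∞, every multi-index k with |k|_𝔰 < δ and every t ∈ (0,1], one has ‖∂^k K_t f‖_{L∞(w)} ≤ C C_K t^{(α+β̄−|k|_𝔰)/ℓ−1} N, where N := sup_{0<s≤1} s^{−α/ℓ} ‖Q_s f‖_{L∞(w)} (assumed finite). Consequently, if |k|_𝔰 < min(α+β̄, δ), the integral ∫₀¹ ∂^k K_t f dt converges absolutely in the norm ‖·‖_{L∞(w)}. -/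

import Mathlib

/-!
Split `t = t/2 + t/2`. Differentiating the admissibility relation `K_t = K_{t/2} Q_{t/2}` under
the integral gives `∂^k K_t = ∂^k K_{t/2} Q_{t/2}`, and Fubini turns this into
`∂^k K_t f = ∂^k K_{t/2} (Q_{t/2} f)`. The weight crosses each kernel through
`w x ≤ w*(x - z) w z`, so everything reduces to bounding `∫ G_t w*` uniformly in `t ≤ 1`; after
the anisotropic rescaling `x ↦ t^{𝔰/ℓ} x` this is the moment condition on `w*`. Hence
`|∂^k K_t f| w ≤ C_K (t/2)^{(β̄-|k|_𝔰)/ℓ-1} (t/2)^{α/ℓ} N ∫ G_{t/2} w*`, and the time integral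
converges exactly when the exponent exceeds `-1`.
-/

open MeasureTheory Set Filter Topology
open scoped ENNReal

noncomputable section

/-- The anisotropic norm `‖x‖_𝔰 = ∑ i, |x i| ^ (1 / 𝔰 i)`. -/
def sNorm {d : ℕ} (𝔰 : Fin (d + 1) → ℝ) (x : Fin (d + 1) → ℝ) : ℝ :=
  ∑ i, |x i| ^ (1 / 𝔰 i)

/-- The scaled degree `|k|_𝔰 = ∑ i, 𝔰 i * k i` of a multiindex `k`. -/
def sDeg {d : ℕ} (𝔰 : Fin (d + 1) → ℝ) (k : Fin (d + 1) → ℕ) : ℝ :=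
  ∑ i, 𝔰 i * (k i : ℝ)

/-- The rescaled function `G_t(x) = t^{-|𝔰|/ℓ} G(t^{-𝔰/ℓ} x)`. -/
def Gt {d : ℕ} (𝔰 : Fin (d + 1) → ℝ) (ℓ : ℝ) (G : (Fin (d + 1) → ℝ) → ℝ)
    (t : ℝ) (x : Fin (d + 1) → ℝ) : ℝ :=
  t ^ (-(∑ i, 𝔰 i) / ℓ) * G fun i => t ^ (-𝔰 i / ℓ) * x i

/-- The temporal weight `φ(x) = min(|x₁|^{1/𝔰₁}, 1)`. -/
def phi {d : ℕ} (𝔰 : Fin (d + 1) → ℝ) (x : Fin (d + 1) → ℝ) : ℝ :=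
  min (|x 0| ^ (1 / 𝔰 0)) 1

/-- `φ(x,y) = min(φ(x), φ(y))`. -/
def phi2 {d : ℕ} (𝔰 : Fin (d + 1) → ℝ) (x y : Fin (d + 1) → ℝ) : ℝ :=
  min (phi 𝔰 x) (phi 𝔰 y)

/-- The weighted sup norm `‖f‖_{L∞(u)} = sup_x |f x| * u x`, valued in `ℝ≥0∞`. -/
def wNorm {d : ℕ} (u f : (Fin (d + 1) → ℝ) → ℝ) : ℝ≥0∞ :=
  ⨆ x, ENNReal.ofReal (|f x| * u x)

/-- A `G`-controlled weight `w` with control function `wStar`. -/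
structure GControlled {d : ℕ} (𝔰 : Fin (d + 1) → ℝ) (ℓ : ℝ)
    (G : (Fin (d + 1) → ℝ) → ℝ) (w wStar : (Fin (d + 1) → ℝ) → ℝ) : Prop where
  cont : Continuous w
  pos : ∀ x, 0 < w x
  le_one : ∀ x, w x ≤ 1
  star_cont : Continuous wStar
  one_le_star : ∀ x, 1 ≤ wStar x
  submul : ∀ x y, w (x + y) ≤ wStar x * w y
  moment : ∀ n : ℝ, 0 ≤ n → ∀ T : ℝ, 0 < T → ∃ B : ℝ, ∀ t ∈ Set.Ioc (0 : ℝ) T,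
    ∀ x, sNorm 𝔰 x ^ n * wStar (fun i => t ^ (𝔰 i / ℓ) * x i) * G x ≤ B

/-- A `G`-type semigroup `Q`. -/
structure GSemigroup {d : ℕ} (𝔰 : Fin (d + 1) → ℝ) (ℓ : ℝ)
    (G : (Fin (d + 1) → ℝ) → ℝ)
    (Q : ℝ → (Fin (d + 1) → ℝ) → (Fin (d + 1) → ℝ) → ℝ) : Prop where
  cont : ∀ t : ℝ, 0 < t →
    Continuous fun p : (Fin (d + 1) → ℝ) × (Fin (d + 1) → ℝ) => Q t p.1 p.2
  semigroup : ∀ s t : ℝ, 0 < s → s < t → ∀ x y,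
    (∫ z, Q (t - s) x z * Q s z y) = Q t x y
  conservative : ∀ x, Tendsto (fun t => ∫ y, Q t x y) (𝓝[>] (0 : ℝ)) (𝓝 1)
  upper : ∃ C₁ : ℝ, 0 < C₁ ∧ ∀ t : ℝ, 0 < t → ∀ x y,
    |Q t x y| ≤ C₁ * Gt 𝔰 ℓ G t (x - y)
  timederiv : ∃ C₂ : ℝ, 0 < C₂ ∧ ∀ x y, ∀ t : ℝ, 0 < t → ∃ q : ℝ,
    HasDerivAt (fun s => Q s x y) q t ∧ |q| ≤ C₂ * t⁻¹ * Gt 𝔰 ℓ G t (x - y)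

/-- The finite set of multiindices `k` with `|k|_𝔰 < c`. -/
def mIdxBelow {d : ℕ} (𝔰 : Fin (d + 1) → ℝ) (c : ℝ) : Finset (Fin (d + 1) → ℕ) :=
  (Fintype.piFinset fun _ : Fin (d + 1) => Finset.range (Nat.ceil (max c 0) + 1)).filter
    fun k => sDeg 𝔰 k < c

/-- A `β̄`-regularizing kernel `K` admissible for the semigroup `Q`, together with
the family `DK k = ∂_x^k K` of its partial derivatives in the first space variable. -/
structure RegKernel {d : ℕ} (𝔰 : Fin (d + 1) → ℝ) (ℓ : ℝ)
    (G : (Fin (d + 1) → ℝ) → ℝ)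
    (Q : ℝ → (Fin (d + 1) → ℝ) → (Fin (d + 1) → ℝ) → ℝ)
    (βb δ CK : ℝ)
    (K : ℝ → (Fin (d + 1) → ℝ) → (Fin (d + 1) → ℝ) → ℝ)
    (DK : (Fin (d + 1) → ℕ) → ℝ → (Fin (d + 1) → ℝ) → (Fin (d + 1) → ℝ) → ℝ) :
    Prop where
  dk_zero : DK 0 = K
  cont : ∀ k : Fin (d + 1) → ℕ, sDeg 𝔰 k < δ → ∀ t : ℝ, 0 < t →
    Continuous fun p : (Fin (d + 1) → ℝ) × (Fin (d + 1) → ℝ) => DK k t p.1 p.2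
  hasDeriv : ∀ (k : Fin (d + 1) → ℕ) (i : Fin (d + 1)),
    sDeg 𝔰 (k + Pi.single i 1) < δ → ∀ t : ℝ, 0 < t → ∀ x y,
      HasDerivAt (fun s : ℝ => DK k t (Function.update x i s) y)
        (DK (k + Pi.single i 1) t x y) (x i)
  conv : ∀ s t : ℝ, 0 < s → s < t → ∀ x y,
    (∫ z, K (t - s) x z * Q s z y) = K t x y
  upper : ∀ k : Fin (d + 1) → ℕ, sDeg 𝔰 k < δ → ∀ t : ℝ, 0 < t → ∀ x y,
    |DK k t x y| ≤ CK * t ^ ((βb - sDeg 𝔰 k) / ℓ - 1) * Gt 𝔰 ℓ G t (x - y)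
  taylor : ∀ k : Fin (d + 1) → ℕ, sDeg 𝔰 k < δ → ∀ t : ℝ, 0 < t →
    ∀ x y h, sNorm 𝔰 h ≤ t ^ (1 / ℓ) →
      |DK k t (x + h) y - ∑ l ∈ mIdxBelow 𝔰 (δ - sDeg 𝔰 k),
          ((∏ i, h i ^ l i) / ∏ i, ((l i).factorial : ℝ)) * DK (k + l) t x y|
        ≤ CK * sNorm 𝔰 h ^ (δ - sDeg 𝔰 k) * t ^ ((βb - δ) / ℓ - 1) *
            Gt 𝔰 ℓ G t (x - y)

section Anisotropic

variable {d : ℕ}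

lemma sNorm_nonneg (𝔰 : Fin (d + 1) → ℝ) (x : Fin (d + 1) → ℝ) : 0 ≤ sNorm 𝔰 x :=
  Finset.sum_nonneg fun _ _ => Real.rpow_nonneg (abs_nonneg _) _

variable {𝔰 : Fin (d + 1) → ℝ}

lemma norm_rpow_le_sNorm (h𝔰 : ∀ i, 0 < 𝔰 i) {x : Fin (d + 1) → ℝ} (hx : 1 ≤ ‖x‖) :
    ‖x‖ ^ (1 / ∑ i, 𝔰 i) ≤ sNorm 𝔰 x := by
  obtain ⟨i, hi⟩ : ∃ i, ‖x i‖ = ‖x‖ := (IsGreatest.pi_norm x).1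
  calc ‖x‖ ^ (1 / ∑ j, 𝔰 j) ≤ ‖x‖ ^ (1 / 𝔰 i) :=
        Real.rpow_le_rpow_of_exponent_le hx <| one_div_le_one_div_of_le (h𝔰 i) <|
          Finset.single_le_sum (fun j _ => (h𝔰 j).le) (Finset.mem_univ i)
    _ = |x i| ^ (1 / 𝔰 i) := by rw [← hi, Real.norm_eq_abs]
    _ ≤ sNorm 𝔰 x := Finset.single_le_sum (f := fun j => |x j| ^ (1 / 𝔰 j))
        (fun j _ => Real.rpow_nonneg (abs_nonneg _) _) (Finset.mem_univ i)

lemma one_add_norm_rpow_le (h𝔰 : ∀ i, 0 < 𝔰 i) {r : ℝ} (hr : 0 ≤ r) (x : Fin (d + 1) → ℝ) :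
    (1 + ‖x‖) ^ r ≤ 2 ^ r * (1 + sNorm 𝔰 x ^ (r * ∑ i, 𝔰 i)) := by
  have hS : 0 < ∑ i, 𝔰 i := Finset.sum_pos (fun i _ => h𝔰 i) Finset.univ_nonempty
  have hpow := Real.rpow_nonneg (sNorm_nonneg 𝔰 x) (r * ∑ i, 𝔰 i)
  rcases le_or_gt ‖x‖ 1 with hx | hx
  · calc (1 + ‖x‖) ^ r ≤ 2 ^ r := Real.rpow_le_rpow (by positivity) (by linarith) hr
      _ ≤ _ := le_mul_of_one_le_right (by positivity) (by linarith)
  · calc (1 + ‖x‖) ^ r ≤ (2 * ‖x‖) ^ r := Real.rpow_le_rpow (by positivity) (by linarith) hr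
      _ = 2 ^ r * (‖x‖ ^ (1 / ∑ i, 𝔰 i)) ^ (r * ∑ i, 𝔰 i) := by
        rw [Real.mul_rpow (by norm_num) (norm_nonneg _), ← Real.rpow_mul (norm_nonneg _),
          one_div_mul_eq_div, mul_div_cancel_right₀ r hS.ne']
      _ ≤ 2 ^ r * sNorm 𝔰 x ^ (r * ∑ i, 𝔰 i) := by
        gcongr
        exact norm_rpow_le_sNorm h𝔰 hx.le
      _ ≤ _ := by gcongr; linarith

end Anisotropic

lemma lintegral_eq_ofReal_prod_mul_lintegral_comp_mul {ι : Type*} [Fintype ι] {c : ι → ℝ}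
    (hc : ∀ i, 0 < c i) {F : (ι → ℝ) → ℝ≥0∞} (hF : Measurable F) :
    (∫⁻ x, F x) = ENNReal.ofReal (∏ i, c i) * ∫⁻ x : ι → ℝ, F (fun i => c i * x i) := by
  classical
  have hdet : (Matrix.diagonal c).det ≠ 0 := by
    rw [Matrix.det_diagonal]; exact Finset.prod_ne_zero_iff.2 fun i _ => (hc i).ne'
  conv_lhs => rw [← Real.smul_map_diagonal_volume_pi hdet]
  rw [lintegral_smul_measure, lintegral_map hF (LinearMap.continuous_on_pi _).measurable,
    Matrix.det_diagonal, abs_of_pos (Finset.prod_pos fun i _ => hc i)]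
  simp only [Matrix.toLin'_apply, smul_eq_mul]
  congr 2 with x
  congr 1 with i
  exact Matrix.mulVec_diagonal c x i

section Rescaled

variable {d : ℕ} {𝔰 : Fin (d + 1) → ℝ} {ℓ : ℝ} {G : (Fin (d + 1) → ℝ) → ℝ}

lemma Gt_nonneg (hG : ∀ x, 0 ≤ G x) {t : ℝ} (ht : 0 < t) (x : Fin (d + 1) → ℝ) :
    0 ≤ Gt 𝔰 ℓ G t x :=
  mul_nonneg (Real.rpow_nonneg ht.le _) (hG _)

lemma Gt_le {B : ℝ} (hGB : ∀ x, G x ≤ B) {t : ℝ} (ht : 0 < t) (x : Fin (d + 1) → ℝ) :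
    Gt 𝔰 ℓ G t x ≤ t ^ (-(∑ i, 𝔰 i) / ℓ) * B :=
  mul_le_mul_of_nonneg_left (hGB _) (Real.rpow_nonneg ht.le _)

lemma measurable_Gt (hG : Measurable G) (t : ℝ) : Measurable (Gt 𝔰 ℓ G t) :=
  (hG.comp (measurable_pi_lambda _ fun i => (measurable_pi_apply i).const_mul _)).const_mul _

lemma Gt_mul_rpow {t : ℝ} (ht : 0 < t) (v : Fin (d + 1) → ℝ) :
    Gt 𝔰 ℓ G t (fun i => t ^ (𝔰 i / ℓ) * v i) = t ^ (-(∑ i, 𝔰 i) / ℓ) * G v := by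
  simp only [Gt, ← mul_assoc, ← Real.rpow_add ht, neg_div, neg_add_cancel, Real.rpow_zero,
    one_mul]

lemma lintegral_Gt_mul_eq (hG : Measurable G) {u : (Fin (d + 1) → ℝ) → ℝ} (hu : Measurable u)
    {t : ℝ} (ht : 0 < t) :
    ∫⁻ v, ENNReal.ofReal (Gt 𝔰 ℓ G t v * u v)
      = ∫⁻ v, ENNReal.ofReal (G v * u fun i => t ^ (𝔰 i / ℓ) * v i) := by
  have hc : ∀ i, 0 < t ^ (𝔰 i / ℓ) := fun i => Real.rpow_pos_of_pos ht _
  have hF : Measurable fun v => ENNReal.ofReal (Gt 𝔰 ℓ G t v * u v) :=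
    ((measurable_Gt hG t).mul hu).ennreal_ofReal
  rw [lintegral_eq_ofReal_prod_mul_lintegral_comp_mul hc hF, ← Real.rpow_sum_of_pos ht,
    ← Finset.sum_div]
  simp only [Gt_mul_rpow ht, mul_assoc]
  rw [← lintegral_const_mul' _ _ ENNReal.ofReal_ne_top]
  congr 1 with v
  rw [← ENNReal.ofReal_mul (Real.rpow_nonneg ht.le _), ← mul_assoc, ← Real.rpow_add ht, neg_div,
    add_neg_cancel, Real.rpow_zero, one_mul]

end Rescaled

namespace GControlled

variable {d : ℕ} {𝔰 : Fin (d + 1) → ℝ} {ℓ : ℝ} {G : (Fin (d + 1) → ℝ) → ℝ}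
  {w wStar : (Fin (d + 1) → ℝ) → ℝ}

lemma wStar_nonneg (hw : GControlled 𝔰 ℓ G w wStar) (x : Fin (d + 1) → ℝ) : 0 ≤ wStar x :=
  zero_le_one.trans (hw.one_le_star x)

lemma exists_G_le (hw : GControlled 𝔰 ℓ G w wStar) (hG : ∀ x, 0 ≤ G x) :
    ∃ B, ∀ x, G x ≤ B := by
  obtain ⟨B, hB⟩ := hw.moment 0 le_rfl 1 one_pos
  refine ⟨B, fun x => le_trans ?_ (hB 1 ⟨one_pos, le_rfl⟩ x)⟩
  rw [Real.rpow_zero, one_mul]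
  exact le_mul_of_one_le_left (hG x) (hw.one_le_star _)

lemma exists_wStar_mul_G_le (hw : GControlled 𝔰 ℓ G w wStar) (h𝔰 : ∀ i, 0 < 𝔰 i)
    (hG : ∀ x, 0 ≤ G x) {r : ℝ} (hr : 0 ≤ r) :
    ∃ B, ∀ t ∈ Ioc (0 : ℝ) 1, ∀ x,
      wStar (fun i => t ^ (𝔰 i / ℓ) * x i) * G x ≤ B * (1 + ‖x‖) ^ (-r) := by
  have hS : 0 ≤ r * ∑ i, 𝔰 i := mul_nonneg hr (Finset.sum_nonneg fun i _ => (h𝔰 i).le)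
  obtain ⟨B₀, hB₀⟩ := hw.moment 0 le_rfl 1 one_pos
  obtain ⟨B₁, hB₁⟩ := hw.moment _ hS 1 one_pos
  refine ⟨2 ^ r * (B₀ + B₁), fun t ht x => ?_⟩
  have hWG := mul_nonneg (hw.wStar_nonneg (fun i => t ^ (𝔰 i / ℓ) * x i)) (hG x)
  rw [Real.rpow_neg (by positivity), ← div_eq_mul_inv, le_div_iff₀ (by positivity)]
  calc wStar (fun i => t ^ (𝔰 i / ℓ) * x i) * G x * (1 + ‖x‖) ^ r
      ≤ wStar (fun i => t ^ (𝔰 i / ℓ) * x i) * G x * (2 ^ r * (1 + sNorm 𝔰 x ^ (r * ∑ i, 𝔰 i))) :=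
        mul_le_mul_of_nonneg_left (one_add_norm_rpow_le h𝔰 hr x) hWG
    _ = 2 ^ r * (sNorm 𝔰 x ^ (0 : ℝ) * wStar (fun i => t ^ (𝔰 i / ℓ) * x i) * G x
          + sNorm 𝔰 x ^ (r * ∑ i, 𝔰 i) * wStar (fun i => t ^ (𝔰 i / ℓ) * x i) * G x) := by
        rw [Real.rpow_zero]; ring
    _ ≤ 2 ^ r * (B₀ + B₁) := by gcongr; exacts [hB₀ t ht x, hB₁ t ht x]

lemma exists_integral_Gt_mul_wStar_le (hw : GControlled 𝔰 ℓ G w wStar) (h𝔰 : ∀ i, 0 < 𝔰 i)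
    (hGm : Measurable G) (hG : ∀ x, 0 ≤ G x) :
    ∃ M, 0 ≤ M ∧ ∀ t ∈ Ioc (0 : ℝ) 1,
      Integrable (fun v => Gt 𝔰 ℓ G t v * wStar v) ∧ ∫ v, Gt 𝔰 ℓ G t v * wStar v ≤ M := by
  -- `d + 2` exceeds the dimension `d + 1`, which makes `(1 + ‖x‖) ^ (-(d + 2))` integrable.
  obtain ⟨B, hB⟩ := hw.exists_wStar_mul_G_le h𝔰 hG (r := d + 2) (by positivity)
  have hB0 : 0 ≤ B := by
    simpa using (mul_nonneg (hw.wStar_nonneg _) (hG 0)).trans (hB 1 ⟨one_pos, le_rfl⟩ 0)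
  have hφ : Integrable fun x : Fin (d + 1) → ℝ => B * (1 + ‖x‖) ^ (-((d : ℝ) + 2)) :=
    (integrable_one_add_norm (by simp)).const_mul B
  have hφ0 : 0 ≤ᵐ[volume] fun x : Fin (d + 1) → ℝ => B * (1 + ‖x‖) ^ (-((d : ℝ) + 2)) :=
    ae_of_all _ fun x => by positivity
  refine ⟨_, integral_nonneg_of_ae hφ0, fun t ht => ?_⟩
  have hf0 : 0 ≤ᵐ[volume] fun v => Gt 𝔰 ℓ G t v * wStar v :=
    ae_of_all _ fun v => mul_nonneg (Gt_nonneg hG ht.1 v) (hw.wStar_nonneg v)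
  have hlin : ∫⁻ v, ENNReal.ofReal (Gt 𝔰 ℓ G t v * wStar v)
      ≤ ENNReal.ofReal (∫ x : Fin (d + 1) → ℝ, B * (1 + ‖x‖) ^ (-((d : ℝ) + 2))) := by
    rw [lintegral_Gt_mul_eq hGm hw.star_cont.measurable ht.1,
      ofReal_integral_eq_lintegral_ofReal hφ hφ0]
    exact lintegral_mono fun x => ENNReal.ofReal_le_ofReal (by rw [mul_comm]; exact hB t ht x)
  have hint : Integrable fun v => Gt 𝔰 ℓ G t v * wStar v :=
    ⟨((measurable_Gt hGm t).mul hw.star_cont.measurable).aestronglyMeasurable,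
      (hasFiniteIntegral_iff_ofReal hf0).2 (hlin.trans_lt ENNReal.ofReal_lt_top)⟩
  refine ⟨hint, ?_⟩
  rw [integral_eq_lintegral_of_nonneg_ae hf0 hint.aestronglyMeasurable]
  exact ENNReal.toReal_le_of_le_ofReal (integral_nonneg_of_ae hφ0) hlin

lemma integrable_Gt (hw : GControlled 𝔰 ℓ G w wStar) (hGm : Measurable G)
    (hG : ∀ x, 0 ≤ G x) {t : ℝ} (ht : 0 < t)
    (hint : Integrable fun v => Gt 𝔰 ℓ G t v * wStar v) : Integrable (Gt 𝔰 ℓ G t) :=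
  hint.mono' (measurable_Gt hGm t).aestronglyMeasurable <| ae_of_all _ fun v => by
    rw [Real.norm_of_nonneg (Gt_nonneg hG ht v)]
    exact le_mul_of_one_le_right (Gt_nonneg hG ht v) (hw.one_le_star v)

end GControlled

section Submultiplicative

variable {E : Type*} [AddGroup E] {w W : E → ℝ}

lemma le_mul_sub_of_submul (hsub : ∀ a b, w (a + b) ≤ W a * w b) (x z : E) :
    w x ≤ W (x - z) * w z := by
  simpa using hsub (x - z) z

lemma pos_of_submul (hw : ∀ x, 0 < w x) (hsub : ∀ a b, w (a + b) ≤ W a * w b) (a : E) :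
    0 < W a :=
  pos_of_mul_pos_left ((hw _).trans_le (hsub a 0)) (hw 0).le

end Submultiplicative

section WeightedConvolution

variable {E : Type*} [AddGroup E] [MeasurableSpace E] [MeasurableAdd E] [MeasurableNeg E]
  {μ : Measure E} [μ.IsAddLeftInvariant] [μ.IsNegInvariant]

lemma integrable_prod_of_norm_le_mul_comp_sub [SFinite μ] {F : E × E → ℝ}
    (hF : AEStronglyMeasurable F (μ.prod μ)) {a b : E → ℝ} (ha : Integrable a μ)
    (hb : Integrable b μ) (hFab : ∀ z y, ‖F (z, y)‖ ≤ a z * b (z - y)) :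
    Integrable F (μ.prod μ) := by
  refine (integrable_prod_iff hF).2 ⟨?_, ?_⟩
  · filter_upwards [hF.prodMk_left] with z hz
    exact ((hb.comp_sub_left z).const_mul (a z)).mono' hz (ae_of_all _ (hFab z))
  · refine (ha.mul_const (∫ v, b v ∂μ)).mono' hF.norm.integral_prod_right' (ae_of_all _ fun z => ?_)
    rw [Real.norm_of_nonneg (integral_nonneg fun y => norm_nonneg _),
      ← integral_sub_left_eq_self b μ z, ← integral_const_mul]
    exact integral_mono_of_nonneg (ae_of_all _ fun y => norm_nonneg _)
      ((hb.comp_sub_left z).const_mul (a z)) (ae_of_all _ (hFab z))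

variable {w W : E → ℝ}

lemma abs_integral_mul_mul_le (hw : ∀ x, 0 < w x) (hsub : ∀ a b, w (a + b) ≤ W a * w b)
    {γ : E → ℝ} (hρ : Integrable (fun v => γ v * W v) μ) {k g : E → ℝ} {x : E} {c N : ℝ}
    (hk : ∀ z, |k z| ≤ c * γ (x - z)) (hg : ∀ z, |g z| * w z ≤ N) :
    |∫ z, k z * g z ∂μ| * w x ≤ c * N * ∫ v, γ v * W v ∂μ := by
  have hg' : ∀ z, |g z| ≤ N / w x * W (x - z) := fun z => by
    rw [div_mul_eq_mul_div, le_div_iff₀ (hw x)]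
    calc |g z| * w x ≤ |g z| * (W (x - z) * w z) :=
          mul_le_mul_of_nonneg_left (le_mul_sub_of_submul hsub x z) (abs_nonneg _)
      _ = W (x - z) * (|g z| * w z) := by ring
      _ ≤ W (x - z) * N :=
          mul_le_mul_of_nonneg_left (hg z) (pos_of_submul hw hsub _).le
      _ = N * W (x - z) := mul_comm _ _
  have hbound : ∀ z, ‖k z * g z‖ ≤ c * N / w x * (γ (x - z) * W (x - z)) := fun z => by
    rw [norm_mul, Real.norm_eq_abs, Real.norm_eq_abs]
    calc |k z| * |g z| ≤ c * γ (x - z) * (N / w x * W (x - z)) :=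
          mul_le_mul (hk z) (hg' z) (abs_nonneg _) ((abs_nonneg _).trans (hk z))
      _ = _ := by ring
  have := norm_integral_le_of_norm_le ((hρ.comp_sub_left x).const_mul (c * N / w x))
    (ae_of_all _ hbound)
  rw [integral_const_mul, integral_sub_left_eq_self (fun v => γ v * W v) μ x,
    Real.norm_eq_abs] at this
  calc |∫ z, k z * g z ∂μ| * w x ≤ c * N / w x * (∫ v, γ v * W v ∂μ) * w x :=
        mul_le_mul_of_nonneg_right this (hw x).le
    _ = c * N * ∫ v, γ v * W v ∂μ := by field_simp [(hw x).ne']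

lemma integral_integral_mul_swap_of_weight [SFinite μ] (hw : ∀ x, 0 < w x)
    (hsub : ∀ a b, w (a + b) ≤ W a * w b) {γ₁ γ₂ : E → ℝ}
    (hρ₁ : Integrable (fun v => γ₁ v * W v) μ) (hρ₂ : Integrable (fun v => γ₂ v * W v) μ)
    {k f : E → ℝ} {q : E → E → ℝ}
    (hm : AEStronglyMeasurable (fun p : E × E => k p.1 * q p.1 p.2 * f p.2) (μ.prod μ))
    {x : E} {c₁ c₂ N : ℝ} (hk : ∀ z, |k z| ≤ c₁ * γ₁ (x - z))
    (hq : ∀ z y, |q z y| ≤ c₂ * γ₂ (z - y)) (hf : ∀ y, |f y| * w y ≤ N) :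
    ∫ y, (∫ z, k z * q z y ∂μ) * f y ∂μ = ∫ z, k z * ∫ y, q z y * f y ∂μ ∂μ := by
  have hW : ∀ a, 0 ≤ W a := fun a => (pos_of_submul hw hsub a).le
  have hf' : ∀ z y, |f y| ≤ N / w x * (W (x - z) * W (z - y)) := fun z y => by
    rw [div_mul_eq_mul_div, le_div_iff₀ (hw x)]
    calc |f y| * w x ≤ |f y| * (W (x - z) * (W (z - y) * w y)) := by
          refine mul_le_mul_of_nonneg_left ?_ (abs_nonneg _)
          exact (le_mul_sub_of_submul hsub x z).trans
            (mul_le_mul_of_nonneg_left (le_mul_sub_of_submul hsub z y) (hW _))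
      _ = W (x - z) * W (z - y) * (|f y| * w y) := by ring
      _ ≤ W (x - z) * W (z - y) * N := mul_le_mul_of_nonneg_left (hf y) (mul_nonneg (hW _) (hW _))
      _ = N * (W (x - z) * W (z - y)) := mul_comm _ _
  have hint : Integrable (fun p : E × E => k p.1 * q p.1 p.2 * f p.2) (μ.prod μ) := by
    refine integrable_prod_of_norm_le_mul_comp_sub hm
      ((hρ₁.comp_sub_left x).const_mul (c₁ * c₂ * N / w x)) hρ₂ fun z y => ?_
    calc ‖k z * q z y * f y‖ = |k z| * |q z y| * |f y| := by
          simp only [norm_mul, Real.norm_eq_abs]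
      _ ≤ c₁ * γ₁ (x - z) * (c₂ * γ₂ (z - y)) * (N / w x * (W (x - z) * W (z - y))) :=
          mul_le_mul (mul_le_mul (hk z) (hq z y) (abs_nonneg _) ((abs_nonneg _).trans (hk z)))
            (hf' z y) (abs_nonneg _)
            (mul_nonneg ((abs_nonneg _).trans (hk z)) ((abs_nonneg _).trans (hq z y)))
      _ = _ := by ring
  calc ∫ y, (∫ z, k z * q z y ∂μ) * f y ∂μ = ∫ y, ∫ z, k z * q z y * f y ∂μ ∂μ := by
        simp_rw [← integral_mul_const]
    _ = ∫ z, ∫ y, k z * q z y * f y ∂μ ∂μ := (integral_integral_swap hint).symm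
    _ = _ := by simp_rw [mul_assoc, integral_const_mul]

end WeightedConvolution

section WeightedSup

variable {d : ℕ} {u f : (Fin (d + 1) → ℝ) → ℝ}

lemma ofReal_le_wNorm (x : Fin (d + 1) → ℝ) : ENNReal.ofReal (|f x| * u x) ≤ wNorm u f :=
  le_iSup (fun x => ENNReal.ofReal (|f x| * u x)) x

lemma abs_mul_le_toReal_wNorm (hf : wNorm u f ≠ ⊤) (x : Fin (d + 1) → ℝ) :
    |f x| * u x ≤ (wNorm u f).toReal :=
  (ENNReal.ofReal_le_iff_le_toReal hf).1 (ofReal_le_wNorm x)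

lemma wNorm_le_ofReal {c : ℝ} (h : ∀ x, |f x| * u x ≤ c) : wNorm u f ≤ ENNReal.ofReal c :=
  iSup_le fun x => ENNReal.ofReal_le_ofReal (h x)

lemma abs_mul_le_rpow_mul_toReal_of_iSup_lt_top {α ℓ : ℝ} {g : ℝ → (Fin (d + 1) → ℝ) → ℝ}
    (hN : (⨆ s ∈ Ioc (0 : ℝ) 1, ENNReal.ofReal (s ^ (-α / ℓ)) * wNorm u (g s)) < ⊤) {s : ℝ}
    (hs : s ∈ Ioc (0 : ℝ) 1) (x : Fin (d + 1) → ℝ) :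
    |g s x| * u x ≤ s ^ (α / ℓ) *
      (⨆ s ∈ Ioc (0 : ℝ) 1, ENNReal.ofReal (s ^ (-α / ℓ)) * wNorm u (g s)).toReal := by
  have hc : 0 < s ^ (-α / ℓ) := Real.rpow_pos_of_pos hs.1 _
  rw [show s ^ (α / ℓ) = (s ^ (-α / ℓ))⁻¹ by rw [neg_div, Real.rpow_neg hs.1.le, inv_inv],
    le_inv_mul_iff₀ hc, ← ENNReal.ofReal_le_iff_le_toReal hN.ne, ENNReal.ofReal_mul hc.le]
  calc ENNReal.ofReal (s ^ (-α / ℓ)) * ENNReal.ofReal (|g s x| * u x)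
      ≤ ENNReal.ofReal (s ^ (-α / ℓ)) * wNorm u (g s) := by gcongr; exact ofReal_le_wNorm x
    _ ≤ _ := le_iSup₂ (f := fun s (_ : s ∈ Ioc (0 : ℝ) 1) =>
        ENNReal.ofReal (s ^ (-α / ℓ)) * wNorm u (g s)) s hs

end WeightedSup

lemma multiIndex_induction {ι : Type*} [Finite ι] [DecidableEq ι] {P : (ι → ℕ) → Prop}
    (zero : P 0) (step : ∀ k i, P k → P (k + Pi.single i 1)) (k : ι → ℕ) : P k := by
  suffices h : ∀ j, P j → P (j + k) by simpa using h 0 zero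
  refine Pi.single_induction (fun k => ∀ j, P j → P (j + k)) k (by simp) ?_ fun i m => ?_
  · intro f g hf hg j hj
    rw [← add_assoc]
    exact hg _ (hf j hj)
  · induction m with
    | zero => simp
    | succ m ih =>
      intro j hj
      rw [Pi.single_add (f := fun _ => ℕ) i m 1, ← add_assoc]
      exact step _ i (ih j hj)

lemma sDeg_add_single {d : ℕ} (𝔰 : Fin (d + 1) → ℝ) (k : Fin (d + 1) → ℕ) (i : Fin (d + 1)) :
    sDeg 𝔰 (k + Pi.single i 1) = sDeg 𝔰 k + 𝔰 i := by
  simp [sDeg, Finset.sum_add_distrib, mul_add, Pi.single_apply]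

namespace RegKernel

variable {d : ℕ} {𝔰 : Fin (d + 1) → ℝ} {ℓ : ℝ} {G : (Fin (d + 1) → ℝ) → ℝ}
  {Q : ℝ → (Fin (d + 1) → ℝ) → (Fin (d + 1) → ℝ) → ℝ} {βb δ CK : ℝ}
  {K : ℝ → (Fin (d + 1) → ℝ) → (Fin (d + 1) → ℝ) → ℝ}
  {DK : (Fin (d + 1) → ℕ) → ℝ → (Fin (d + 1) → ℝ) → (Fin (d + 1) → ℝ) → ℝ}

lemma abs_DK_mul_le (hK : RegKernel 𝔰 ℓ G Q βb δ CK K DK) (hCK : 0 ≤ CK) {B : ℝ}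
    (hGB : ∀ x, G x ≤ B) {j : Fin (d + 1) → ℕ} (hj : sDeg 𝔰 j < δ) {τ : ℝ} (hτ : 0 < τ)
    (x z : Fin (d + 1) → ℝ) {q C : ℝ} (hq : |q| ≤ C) :
    |DK j τ x z * q|
      ≤ CK * τ ^ ((βb - sDeg 𝔰 j) / ℓ - 1) * (τ ^ (-(∑ i, 𝔰 i) / ℓ) * B) * C := by
  have hDK := (hK.upper j hj τ hτ x z).trans <|
    mul_le_mul_of_nonneg_left (Gt_le hGB hτ (x - z)) (by positivity)
  rw [abs_mul]
  exact mul_le_mul hDK hq (abs_nonneg _) ((abs_nonneg _).trans hDK)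

lemma hasDerivAt_integral_DK_mul (hK : RegKernel 𝔰 ℓ G Q βb δ CK K DK) (hQ : GSemigroup 𝔰 ℓ G Q)
    (hCK : 0 ≤ CK) {B : ℝ} (hGB : ∀ x, G x ≤ B) {k : Fin (d + 1) → ℕ} {i : Fin (d + 1)}
    (hk : sDeg 𝔰 k < δ) (hki : sDeg 𝔰 (k + Pi.single i 1) < δ) {τ s : ℝ} (hτ : 0 < τ)
    (hs : 0 < s) (hGs : Integrable (Gt 𝔰 ℓ G s)) (x y : Fin (d + 1) → ℝ) :
    HasDerivAt (fun a => ∫ z, DK k τ (Function.update x i a) z * Q s z y)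
      (∫ z, DK (k + Pi.single i 1) τ x z * Q s z y) (x i) := by
  obtain ⟨C₁, -, hC₁⟩ := hQ.upper
  have hcont : ∀ j, sDeg 𝔰 j < δ → ∀ x', Continuous fun z => DK j τ x' z * Q s z y :=
    fun j hj x' => ((hK.cont j hj τ hτ).comp (continuous_const.prodMk continuous_id)).mul
      ((hQ.cont s hs).comp (continuous_id.prodMk continuous_const))
  have hbound : ∀ j, sDeg 𝔰 j < δ → ∀ x' z, ‖DK j τ x' z * Q s z y‖
      ≤ CK * τ ^ ((βb - sDeg 𝔰 j) / ℓ - 1) * (τ ^ (-(∑ i, 𝔰 i) / ℓ) * B)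
          * (C₁ * Gt 𝔰 ℓ G s (z - y)) :=
    fun j hj x' z => hK.abs_DK_mul_le hCK hGB hj hτ x' z (hC₁ s hs z y)
  have hint : ∀ c : ℝ, Integrable fun z => c * (C₁ * Gt 𝔰 ℓ G s (z - y)) :=
    fun c => ((hGs.comp_sub_right y).const_mul C₁).const_mul c
  have hF : Integrable fun z => DK k τ x z * Q s z y :=
    (hint _).mono' (hcont k hk x).aestronglyMeasurable (Eventually.of_forall (hbound k hk x))
  have hderiv := hasDerivAt_integral_of_dominated_loc_of_deriv_le (x₀ := x i)
    (F := fun a z => DK k τ (Function.update x i a) z * Q s z y)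
    (F' := fun a z => DK (k + Pi.single i 1) τ (Function.update x i a) z * Q s z y)
    Filter.univ_mem (Eventually.of_forall fun a => (hcont k hk _).aestronglyMeasurable)
    (by simpa using hF) (hcont _ hki _).aestronglyMeasurable
    (Eventually.of_forall fun z a _ => hbound _ hki _ z) (hint _)
    (Eventually.of_forall fun z a _ => by
      simpa using (hK.hasDeriv k i hki τ hτ (Function.update x i a) z).mul_const (Q s z y))
  simpa using hderiv.2

lemma DK_eq_integral_DK_mul_Q (hK : RegKernel 𝔰 ℓ G Q βb δ CK K DK) (hQ : GSemigroup 𝔰 ℓ G Q)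
    (h𝔰 : ∀ i, 0 ≤ 𝔰 i) (hCK : 0 ≤ CK) {B : ℝ} (hGB : ∀ x, G x ≤ B) {s t : ℝ} (hs : 0 < s)
    (hst : s < t) (hGs : Integrable (Gt 𝔰 ℓ G s)) {k : Fin (d + 1) → ℕ} (hk : sDeg 𝔰 k < δ)
    (x y : Fin (d + 1) → ℝ) : DK k t x y = ∫ z, DK k (t - s) x z * Q s z y := by
  revert x y
  refine multiIndex_induction (P := fun k => sDeg 𝔰 k < δ → ∀ x y,
    DK k t x y = ∫ z, DK k (t - s) x z * Q s z y) ?_ ?_ k hk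
  · intro _ x y
    rw [hK.dk_zero]
    exact (hK.conv s t hs hst x y).symm
  · intro k i ih hki x y
    have hk : sDeg 𝔰 k < δ := by linarith [h𝔰 i, sDeg_add_single 𝔰 k i]
    have hL := hK.hasDeriv k i hki t (hs.trans hst) x y
    simp_rw [ih hk] at hL
    exact hL.unique (hK.hasDerivAt_integral_DK_mul hQ hCK hGB hk hki (sub_pos.2 hst) hs hGs x y)

lemma integral_DK_mul_eq (hK : RegKernel 𝔰 ℓ G Q βb δ CK K DK) (hQ : GSemigroup 𝔰 ℓ G Q)
    (h𝔰 : ∀ i, 0 ≤ 𝔰 i) (hCK : 0 ≤ CK) {B : ℝ} (hGB : ∀ x, G x ≤ B)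
    {w wStar : (Fin (d + 1) → ℝ) → ℝ} (hw : GControlled 𝔰 ℓ G w wStar) (hGm : Measurable G)
    (hG : ∀ x, 0 ≤ G x) {s t : ℝ} (hs : 0 < s) (hst : s < t)
    (hρs : Integrable fun v => Gt 𝔰 ℓ G s v * wStar v)
    (hρts : Integrable fun v => Gt 𝔰 ℓ G (t - s) v * wStar v)
    {f : (Fin (d + 1) → ℝ) → ℝ} (hf : Measurable f) {N : ℝ} (hfN : ∀ y, |f y| * w y ≤ N)
    {k : Fin (d + 1) → ℕ} (hk : sDeg 𝔰 k < δ) (x : Fin (d + 1) → ℝ) :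
    ∫ y, DK k t x y * f y = ∫ z, DK k (t - s) x z * ∫ y, Q s z y * f y := by
  obtain ⟨C₁, -, hC₁⟩ := hQ.upper
  have hτ := sub_pos.2 hst
  simp_rw [hK.DK_eq_integral_DK_mul_Q hQ h𝔰 hCK hGB hs hst (hw.integrable_Gt hGm hG hs hρs) hk x]
  have hm : AEStronglyMeasurable (fun p : (Fin (d + 1) → ℝ) × (Fin (d + 1) → ℝ) =>
      DK k (t - s) x p.1 * Q s p.1 p.2 * f p.2) (volume.prod volume) :=
    ((((hK.cont k hk _ hτ).comp (continuous_const.prodMk continuous_fst)).mul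
      (hQ.cont s hs)).measurable.mul (hf.comp measurable_snd)).aestronglyMeasurable
  exact integral_integral_mul_swap_of_weight hw.pos hw.submul hρts hρs hm
    (fun z => hK.upper k hk _ hτ x z) (fun z y => hC₁ s hs z y) hfN

lemma wNorm_DK_le (hK : RegKernel 𝔰 ℓ G Q βb δ CK K DK) (hQ : GSemigroup 𝔰 ℓ G Q)
    (h𝔰 : ∀ i, 0 ≤ 𝔰 i) (hCK : 0 ≤ CK) {B : ℝ} (hGB : ∀ x, G x ≤ B)
    {w wStar : (Fin (d + 1) → ℝ) → ℝ} (hw : GControlled 𝔰 ℓ G w wStar) (hGm : Measurable G)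
    (hG : ∀ x, 0 ≤ G x) {M : ℝ} (hM : ∀ t ∈ Ioc (0 : ℝ) 1,
      Integrable (fun v => Gt 𝔰 ℓ G t v * wStar v) ∧ ∫ v, Gt 𝔰 ℓ G t v * wStar v ≤ M)
    {f : (Fin (d + 1) → ℝ) → ℝ} (hf : Measurable f) (hfw : wNorm w f ≠ ⊤) {α : ℝ}
    {N : ℝ≥0∞} (hN : N ≠ ⊤)
    (hQf : ∀ s ∈ Ioc (0 : ℝ) 1, ∀ z, |∫ y, Q s z y * f y| * w z ≤ s ^ (α / ℓ) * N.toReal)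
    {k : Fin (d + 1) → ℕ} (hk : sDeg 𝔰 k < δ) {t : ℝ} (ht : t ∈ Ioc (0 : ℝ) 1) :
    wNorm w (fun x => ∫ y, DK k t x y * f y)
      ≤ ENNReal.ofReal (M * CK * (t / 2) ^ ((α + βb - sDeg 𝔰 k) / ℓ - 1)) * N := by
  have hs : t / 2 ∈ Ioc (0 : ℝ) 1 := ⟨half_pos ht.1, by linarith [ht.2]⟩
  have hs0 := hs.1
  have hρ := hM _ hs
  rw [← ENNReal.ofReal_toReal hN, ← ENNReal.ofReal_mul' ENNReal.toReal_nonneg]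
  refine wNorm_le_ofReal fun x => ?_
  rw [hK.integral_DK_mul_eq hQ h𝔰 hCK hGB hw hGm hG hs0 (half_lt_self ht.1) hρ.1
    (by rw [sub_half]; exact hρ.1) hf (abs_mul_le_toReal_wNorm hfw) hk x, sub_half]
  calc _ ≤ CK * (t / 2) ^ ((βb - sDeg 𝔰 k) / ℓ - 1) * ((t / 2) ^ (α / ℓ) * N.toReal)
        * ∫ v, Gt 𝔰 ℓ G (t / 2) v * wStar v :=
        abs_integral_mul_mul_le hw.pos hw.submul hρ.1 (fun z => hK.upper k hk _ hs0 x z)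
          (hQf _ hs)
    _ ≤ CK * (t / 2) ^ ((βb - sDeg 𝔰 k) / ℓ - 1) * ((t / 2) ^ (α / ℓ) * N.toReal) * M := by
        gcongr
        exact hρ.2
    _ = _ := by
        rw [show (α + βb - sDeg 𝔰 k) / ℓ - 1 = (βb - sDeg 𝔰 k) / ℓ - 1 + α / ℓ by ring,
          Real.rpow_add hs0]
        ring

end RegKernel

lemma div_two_rpow_le {t ℓ c κ δ : ℝ} (ht : 0 ≤ t) (hℓ : 0 < ℓ) (hκ : κ < δ) :
    (t / 2) ^ ((c - κ) / ℓ - 1) ≤ 2 ^ ((|c| + δ) / ℓ + 1) * t ^ ((c - κ) / ℓ - 1) := by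
  rw [Real.div_rpow ht zero_le_two, div_eq_mul_inv, ← Real.rpow_neg zero_le_two, mul_comm]
  gcongr
  · exact one_le_two
  · have := div_le_div_of_nonneg_right (a := -(c - κ)) (b := |c| + δ)
      (by linarith [neg_abs_le c]) hℓ.le
    rw [neg_div] at this
    linarith

lemma setLIntegral_Ioc_lt_top_of_le_rpow {F : ℝ → ℝ≥0∞} {c e : ℝ} {N : ℝ≥0∞} (hN : N < ⊤)
    (he : -1 < e) (hF : ∀ t ∈ Ioc (0 : ℝ) 1, F t ≤ ENNReal.ofReal (c * t ^ e) * N) :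
    ∫⁻ t in Ioc (0 : ℝ) 1, F t < ⊤ := by
  have hint : IntegrableOn (fun t : ℝ => c * t ^ e) (Ioc 0 1) := by
    have := (intervalIntegral.intervalIntegrable_rpow' (a := 0) (b := 1) he).const_mul c
    rwa [intervalIntegrable_iff, uIoc_of_le zero_le_one] at this
  calc ∫⁻ t in Ioc (0 : ℝ) 1, F t ≤ ∫⁻ t in Ioc (0 : ℝ) 1, ENNReal.ofReal (c * t ^ e) * N :=
        setLIntegral_mono (by fun_prop) hF
    _ = (∫⁻ t in Ioc (0 : ℝ) 1, ENNReal.ofReal (c * t ^ e)) * N := lintegral_mul_const' _ _ hN.ne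
    _ < ⊤ := ENNReal.mul_lt_top hint.lintegral_lt_top hN

theorem regularizing_kernel_besov_bound_general
    {d : ℕ} (𝔰 : Fin (d + 1) → ℝ) (h𝔰 : ∀ i, 1 ≤ 𝔰 i) (ℓ : ℝ) (hℓ : 0 < ℓ)
    (G : (Fin (d + 1) → ℝ) → ℝ) (hGmeas : Measurable G) (hGnonneg : ∀ x, 0 ≤ G x)
    (w wStar : (Fin (d + 1) → ℝ) → ℝ) (hw : GControlled 𝔰 ℓ G w wStar)
    (Q : ℝ → (Fin (d + 1) → ℝ) → (Fin (d + 1) → ℝ) → ℝ) (hQ : GSemigroup 𝔰 ℓ G Q)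
    (βb δ CK : ℝ) (hCK : 0 < CK)
    (K : ℝ → (Fin (d + 1) → ℝ) → (Fin (d + 1) → ℝ) → ℝ)
    (DK : (Fin (d + 1) → ℕ) → ℝ → (Fin (d + 1) → ℝ) → (Fin (d + 1) → ℝ) → ℝ)
    (hK : RegKernel 𝔰 ℓ G Q βb δ CK K DK)
    (α : ℝ) :
    ∃ C : ℝ, 0 < C ∧ ∀ f : (Fin (d + 1) → ℝ) → ℝ, Measurable f →
      wNorm w f < ⊤ →
      (⨆ s ∈ Set.Ioc (0 : ℝ) 1, ENNReal.ofReal (s ^ (-α / ℓ)) *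
          wNorm w fun x => ∫ y, Q s x y * f y) < ⊤ →
      (∀ k : Fin (d + 1) → ℕ, sDeg 𝔰 k < δ → ∀ t ∈ Set.Ioc (0 : ℝ) 1,
        wNorm w (fun x => ∫ y, DK k t x y * f y)
          ≤ ENNReal.ofReal (C * CK * t ^ ((α + βb - sDeg 𝔰 k) / ℓ - 1)) *
              ⨆ s ∈ Set.Ioc (0 : ℝ) 1, ENNReal.ofReal (s ^ (-α / ℓ)) *
                wNorm w fun x => ∫ y, Q s x y * f y) ∧
      (∀ k : Fin (d + 1) → ℕ, sDeg 𝔰 k < min (α + βb) δ →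
        ∫⁻ t in Set.Ioc (0 : ℝ) 1, wNorm w (fun x => ∫ y, DK k t x y * f y) < ⊤) := by
  have h𝔰₀ : ∀ i, 0 < 𝔰 i := fun i => one_pos.trans_le (h𝔰 i)
  obtain ⟨B, hGB⟩ := hw.exists_G_le hGnonneg
  obtain ⟨M, hM0, hM⟩ := hw.exists_integral_Gt_mul_wStar_le h𝔰₀ hGmeas hGnonneg
  refine ⟨(M + 1) * 2 ^ ((|α + βb| + δ) / ℓ + 1), by positivity, fun f hf hfw hN => ?_⟩
  set N := ⨆ s ∈ Ioc (0 : ℝ) 1, ENNReal.ofReal (s ^ (-α / ℓ)) *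
    wNorm w fun x => ∫ y, Q s x y * f y
  have hbound : ∀ k : Fin (d + 1) → ℕ, sDeg 𝔰 k < δ → ∀ t ∈ Ioc (0 : ℝ) 1,
      wNorm w (fun x => ∫ y, DK k t x y * f y) ≤ ENNReal.ofReal ((M + 1) *
        2 ^ ((|α + βb| + δ) / ℓ + 1) * CK * t ^ ((α + βb - sDeg 𝔰 k) / ℓ - 1)) * N := by
    intro k hk t ht
    refine (hK.wNorm_DK_le hQ (fun i => (h𝔰₀ i).le) hCK.le hGB hw hGmeas hGnonneg hM hf hfw.ne
      hN.ne (fun s hs z => abs_mul_le_rpow_mul_toReal_of_iSup_lt_top hN hs z) hk ht).trans ?_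
    have ht0 := ht.1
    gcongr ENNReal.ofReal ?_ * _
    calc M * CK * (t / 2) ^ ((α + βb - sDeg 𝔰 k) / ℓ - 1)
        ≤ (M + 1) * CK * (2 ^ ((|α + βb| + δ) / ℓ + 1) * t ^ ((α + βb - sDeg 𝔰 k) / ℓ - 1)) := by
          gcongr
          exacts [le_add_of_nonneg_right zero_le_one, div_two_rpow_le ht0.le hℓ hk]
      _ = _ := by ring
  refine ⟨hbound, fun k hk => setLIntegral_Ioc_lt_top_of_le_rpow hN ?_
    (hbound k (hk.trans_le (min_le_right _ _)))⟩
  have := div_pos (sub_pos.2 (hk.trans_le (min_le_left _ _))) hℓ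
  linarith

/-- Lemma 4.2 (i). -/
theorem regularizing_kernel_besov_bound
    {d : ℕ} (𝔰 : Fin (d + 1) → ℝ) (h𝔰 : ∀ i, 1 ≤ 𝔰 i) (ℓ : ℝ) (hℓ : 0 < ℓ)
    (G : (Fin (d + 1) → ℝ) → ℝ) (hGmeas : Measurable G) (hGnonneg : ∀ x, 0 ≤ G x)
    (w wStar : (Fin (d + 1) → ℝ) → ℝ) (hw : GControlled 𝔰 ℓ G w wStar)
    (Q : ℝ → (Fin (d + 1) → ℝ) → (Fin (d + 1) → ℝ) → ℝ) (hQ : GSemigroup 𝔰 ℓ G Q)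
    (βb δ CK : ℝ) (hβb : 0 < βb) (hδ : 0 < δ) (hCK : 0 < CK)
    (K : ℝ → (Fin (d + 1) → ℝ) → (Fin (d + 1) → ℝ) → ℝ)
    (DK : (Fin (d + 1) → ℕ) → ℝ → (Fin (d + 1) → ℝ) → (Fin (d + 1) → ℝ) → ℝ)
    (hK : RegKernel 𝔰 ℓ G Q βb δ CK K DK)
    (α : ℝ) (hα : α ≤ 0) :
    ∃ C : ℝ, 0 < C ∧ ∀ f : (Fin (d + 1) → ℝ) → ℝ, Measurable f →
      wNorm w f < ⊤ →
      (⨆ s ∈ Set.Ioc (0 : ℝ) 1, ENNReal.ofReal (s ^ (-α / ℓ)) *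
          wNorm w fun x => ∫ y, Q s x y * f y) < ⊤ →
      (∀ k : Fin (d + 1) → ℕ, sDeg 𝔰 k < δ → ∀ t ∈ Set.Ioc (0 : ℝ) 1,
        wNorm w (fun x => ∫ y, DK k t x y * f y)
          ≤ ENNReal.ofReal (C * CK * t ^ ((α + βb - sDeg 𝔰 k) / ℓ - 1)) *
              ⨆ s ∈ Set.Ioc (0 : ℝ) 1, ENNReal.ofReal (s ^ (-α / ℓ)) *
                wNorm w fun x => ∫ y, Q s x y * f y) ∧
      (∀ k : Fin (d + 1) → ℕ, sDeg 𝔰 k < min (α + βb) δ →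
        ∫⁻ t in Set.Ioc (0 : ℝ) 1, wNorm w (fun x => ∫ y, DK k t x y * f y) < ⊤) :=
  regularizing_kernel_besov_bound_general 𝔰 h𝔰 ℓ hℓ G hGmeas hGnonneg w wStar hw Q hQ βb δ CK hCK K
    DK hK α
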